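/- Behavior under reflection of the ordering (Proposition, part 2): let G be a Gauss diagram on n strings and let Ḡ be the Gauss diagram obtained from G by reversing the ordering of the strings, i.e., string k of Ḡ is string n+1−k of G, with all arrows, endpoint orders and signs retained. For i ∈ {1,…,n} write ī := n+1−i, and for I = {i_1 < … < i_r} with j ∉ I write Ī := {ī : i ∈ I} and j̄ := n+1−j. Then Z_{I,j}(Ḡ) = (−1)^r · Z_{Ī, j̄}(G). -/

import Mathlib

/-!
Combinatorial Gauss diagrams on `n` strings and the tree invariants `Z I j`.

A Gauss diagram is encoded by a finite set of arrows; each arrow records the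
string (an element of `Fin n`) and the position (a rational number, increasing
in the direction of the orientation of the string) of its tail and of its head,
together with a sign `±1`.  Only the induced combinatorial data (linear order of
the endpoints along each string, the tail/head pairing and the signs) is ever
used by the definitions below.

The tree invariant `Z I j G = ∑_{A ∈ 𝒜_{I,j}} sign(A) ⟨A, G⟩` is computed as a
signed count over all subsets `S` of the arrows of `G` that form a planar tree
diagram with leaves on `I` and trunk on `j`: each pair `(A, φ)` of a planar tree
diagram `A ∈ 𝒜_{I,j}` together with an embedding `φ : A → G` corresponds
bijectively to the subset `S = Im φ` of the arrows of `G`, which is itself a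
planar tree diagram with leaves on `I` and trunk on `j`; the contribution of the
pair to the sum is `sign(A) · sign(φ) = (-1)^{#right-pointing arrows of S} · ∏_{a ∈ S} sign(a)`.
-/

open scoped Classical

/-- An arrow of a Gauss diagram on `n` strings: a tail endpoint, a head
endpoint (each given by the string it lies on and its position along that
string) and a sign. -/
structure GArrow (n : ℕ) where
  tailStr : Fin n
  tailPos : ℚ
  headStr : Fin n
  headPos : ℚ
  sign : ℤ
deriving DecidableEq

namespace GArrow

/-- The two endpoints of an arrow: `false` is the tail, `true` is the head. -/
def ep {n : ℕ} (a : GArrow n) : Bool → Fin n × ℚ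
  | false => (a.tailStr, a.tailPos)
  | true => (a.headStr, a.headPos)

end GArrow

/-- A Gauss diagram on `n` strings: a finite set of signed arrows with all
endpoints pairwise distinct, and all signs equal to `±1`. -/
structure GaussDiagram (n : ℕ) where
  arrows : Finset (GArrow n)
  sign_pm : ∀ a ∈ arrows, a.sign = 1 ∨ a.sign = -1
  endpoints_distinct : ∀ a ∈ arrows, ∀ b ∈ arrows, ∀ s t : Bool,
    a.ep s = b.ep t → a = b ∧ s = t

/-- `S` is a tree diagram with leaves on `I` and trunk on `j`:
* the head and the tail of every arrow lie on different strings;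
* for each `i ∈ I` there is exactly one arrow tail on string `i`, and there are
  no arrow tails on strings outside `I`;
* every arrow head lies on a string of `I ∪ {j}`;
* on each string `i ∈ I` all arrow heads precede the unique arrow tail. -/
def IsTreeDiagram {n : ℕ} (I : Finset (Fin n)) (j : Fin n)
    (S : Finset (GArrow n)) : Prop :=
  (∀ a ∈ S, a.tailStr ≠ a.headStr) ∧
  (∀ i ∈ I, ∃! a, a ∈ S ∧ a.tailStr = i) ∧
  (∀ a ∈ S, a.tailStr ∈ I) ∧
  (∀ a ∈ S, a.headStr ∈ I ∨ a.headStr = j) ∧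
  (∀ a ∈ S, ∀ b ∈ S, a.headStr = b.tailStr → a.headPos < b.tailPos)

/-- `ParentRel S s t` : string `s` is the parent of string `t` in the rooted
tree determined by the tree diagram `S`, i.e. the (unique) arrow with tail on
`t` has its head on `s`. -/
def ParentRel {n : ℕ} (S : Finset (GArrow n)) (s t : Fin n) : Prop :=
  ∃ a ∈ S, a.tailStr = t ∧ a.headStr = s

/-- `Descends S s k` : string `k` belongs to the subtree of string `s` (it is
`s` itself or an iterated child of `s`). -/
def Descends {n : ℕ} (S : Finset (GArrow n)) : Fin n → Fin n → Prop :=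
  Relation.ReflTransGen (ParentRel S)

/-- `S` is a *planar* tree diagram with leaves on `I` and trunk on `j`: the
rooted tree `T_S` determined by `S` can be drawn in the plane so that the
clockwise order of its leaves, starting from the root on string `j`, is the
order of the string numbers.  Combinatorially this says that:
* the parent relation makes the strings carrying the arrows into a tree rooted
  at `j` (every leaf string is an iterated child of `j`);
* the whole subtree hanging from an arrow lies on the same side of the string
  carrying the head of that arrow as its tail does;
* two subtrees hanging on the same side of a common string are ordered, along
  that string, compatibly with the order of the strings: for two arrow heads on
  the same string, with both tails on the left, the subtree attached closer to
  the beginning of the string is the one carrying the larger string numbers,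
  while for two tails on the right it is the one carrying the smaller string
  numbers. -/
def IsPlanarTreeDiagram {n : ℕ} (I : Finset (Fin n)) (j : Fin n)
    (S : Finset (GArrow n)) : Prop :=
  IsTreeDiagram I j S ∧
  (∀ i ∈ I, Relation.TransGen (ParentRel S) j i) ∧
  (∀ a ∈ S, ∀ k : Fin n, Descends S a.tailStr k →
    (a.tailStr < a.headStr ↔ k < a.headStr)) ∧
  (∀ a ∈ S, ∀ b ∈ S, a.headStr = b.headStr → a.headPos < b.headPos →
    ∀ k k' : Fin n, Descends S a.tailStr k → Descends S b.tailStr k' →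
      ((a.tailStr < a.headStr → b.tailStr < b.headStr → k' < k) ∧
       (a.headStr < a.tailStr → b.headStr < b.tailStr → k < k')))

/-- The sign `(-1)^q` of an (embedded) arrow diagram, where `q` is the number
of right-pointing arrows (tail on a string of smaller number than the head). -/
noncomputable def treeSign {n : ℕ} (S : Finset (GArrow n)) : ℤ :=
  (-1) ^ (S.filter fun a => a.tailStr < a.headStr).card

/-- The tree invariant `Z_{I,j}(G) = ∑_{A ∈ 𝒜_{I,j}} sign(A)·⟨A,G⟩`, computed
as the signed count of embedded planar tree diagrams with leaves on `I` and
trunk on `j` inside `G`.  In particular `Z ∅ j G = 1` (only `S = ∅`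
contributes). -/
noncomputable def Z {n : ℕ} (I : Finset (Fin n)) (j : Fin n)
    (G : GaussDiagram n) : ℤ :=
  ∑ S ∈ G.arrows.powerset,
    if IsPlanarTreeDiagram I j S then treeSign S * ∏ a ∈ S, a.sign else 0

/-!
Reversing the order of the strings sends each set `S` of arrows of `G` to a set of arrows of
`Ḡ`, bijectively, and `S` is a planar tree diagram with leaves on `Ī` and trunk on `j̄` exactly
when its image is one with leaves on `I` and trunk on `j`: the planarity conditions are mirror
symmetric, left and right subtrees trading places while the order along each string is kept.
The only delicate point is that a subtree never contains the string carrying the head of the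
arrow it hangs from; this holds because the parent relation has no cycle through the trunk
`j ∉ I`. Signs of arrows are unchanged, whereas every arrow switches between right- and
left-pointing, and a tree diagram with leaves on `I` has exactly `|I|` arrows, whence the
factor `(-1)^|I|`.
-/

namespace GArrow

variable {n : ℕ}

@[simps]
def reflect (a : GArrow n) : GArrow n :=
  ⟨a.tailStr.rev, a.tailPos, a.headStr.rev, a.headPos, a.sign⟩

theorem reflect_involutive : Function.Involutive (reflect (n := n)) := by
  rintro ⟨⟩
  simp [reflect]

theorem reflect_injective : Function.Injective (reflect (n := n)) :=
  reflect_involutive.injective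

end GArrow

open GArrow

section Reflection

variable {n : ℕ}

theorem Finset.image_image_of_involutive {α : Type*} [DecidableEq α] {f : α → α}
    (hf : Function.Involutive f) (s : Finset α) : (s.image f).image f = s := by
  rw [Finset.image_image, hf.comp_self, Finset.image_id]

theorem parentRel_image_reflect {S : Finset (GArrow n)} {s t : Fin n} :
    ParentRel (S.image reflect) s t ↔ ParentRel S s.rev t.rev := by
  simp only [ParentRel, Finset.exists_mem_image, reflect_tailStr, reflect_headStr,
    Fin.rev_eq_iff]

theorem Descends.of_image_reflect {S : Finset (GArrow n)} {s t : Fin n}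
    (h : Descends (S.image reflect) s t) : Descends S s.rev t.rev :=
  h.lift Fin.rev fun _ _ => parentRel_image_reflect.mp

theorem transGen_parentRel_image_reflect {S : Finset (GArrow n)} {s t : Fin n}
    (h : Relation.TransGen (ParentRel S) s t) :
    Relation.TransGen (ParentRel (S.image reflect)) s.rev t.rev :=
  h.lift Fin.rev fun _ _ hst => parentRel_image_reflect.mpr (by simpa using hst)

theorem Relation.not_transGen_self_of_reflTransGen_root {α : Type*} {r : α → α → Prop}
    (pred_unique : ∀ s s' t, r s t → r s' t → s = s') {root : α} (hroot : ∀ s, ¬ r s root)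
    {t : α} (ht : Relation.ReflTransGen r root t) : ¬ Relation.TransGen r t t := by
  induction ht with
  | refl =>
    intro hcycle
    obtain ⟨s, -, hs⟩ := Relation.TransGen.tail'_iff.mp hcycle
    exact hroot s hs
  | @tail b c _ hbc ih =>
    intro hcycle
    obtain ⟨s, hcs, hsc⟩ := Relation.TransGen.tail'_iff.mp hcycle
    obtain rfl := pred_unique s b c hsc hbc
    exact ih (Relation.TransGen.head' hbc hcs)

namespace IsTreeDiagram

variable {I : Finset (Fin n)} {j : Fin n} {S : Finset (GArrow n)}

theorem parentRel_unique (hS : IsTreeDiagram I j S) {s s' t : Fin n}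
    (hs : ParentRel S s t) (hs' : ParentRel S s' t) : s = s' := by
  obtain ⟨a, ha, rfl, rfl⟩ := hs
  obtain ⟨b, hb, hba, rfl⟩ := hs'
  obtain ⟨c, -, hc⟩ := hS.2.1 a.tailStr (hS.2.2.1 a ha)
  rw [hc a ⟨ha, rfl⟩, hc b ⟨hb, hba⟩]

theorem not_parentRel_trunk (hS : IsTreeDiagram I j S) (hj : j ∉ I) (s : Fin n) :
    ¬ ParentRel S s j := by
  rintro ⟨a, ha, rfl, -⟩
  exact hj (hS.2.2.1 a ha)

theorem card_eq (hS : IsTreeDiagram I j S) : S.card = I.card := by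
  refine Finset.card_bij (fun a _ => a.tailStr) (fun a ha => hS.2.2.1 a ha) ?_ ?_
  · intro a ha b hb hab
    obtain ⟨c, -, hc⟩ := hS.2.1 a.tailStr (hS.2.2.1 a ha)
    rw [hc a ⟨ha, rfl⟩, hc b ⟨hb, hab.symm⟩]
  · intro i hi
    obtain ⟨a, ⟨ha, rfl⟩, -⟩ := hS.2.1 i hi
    exact ⟨a, ha, rfl⟩

theorem image_reflect (hS : IsTreeDiagram I j S) :
    IsTreeDiagram (I.image Fin.rev) j.rev (S.image reflect) := by
  obtain ⟨hne, htail_unique, htail, hhead, hbefore⟩ := hS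
  refine ⟨?_, ?_, ?_, ?_, ?_⟩
  · simpa using hne
  · simp only [Finset.forall_mem_image]
    intro i hi
    obtain ⟨a, ⟨ha, rfl⟩, hunique⟩ := htail_unique i hi
    refine ⟨reflect a, ⟨Finset.mem_image_of_mem _ ha, rfl⟩, ?_⟩
    simp only [Finset.mem_image, and_imp, forall_exists_index]
    rintro _ b hb rfl hba
    rw [hunique b ⟨hb, by simpa using hba⟩]
  · simpa using htail
  · simpa using hhead
  · simpa using hbefore

end IsTreeDiagram

namespace IsPlanarTreeDiagram

variable {I : Finset (Fin n)} {j : Fin n} {S : Finset (GArrow n)}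

theorem not_descends_tailStr_headStr (hS : IsPlanarTreeDiagram I j S) (hj : j ∉ I)
    {a : GArrow n} (ha : a ∈ S) : ¬ Descends S a.tailStr a.headStr := by
  intro hdesc
  have hroot : Relation.ReflTransGen (ParentRel S) j a.headStr := by
    rcases hS.1.2.2.2.1 a ha with hI | rfl
    · exact (hS.2.1 a.headStr hI).to_reflTransGen
    · exact .refl
  exact Relation.not_transGen_self_of_reflTransGen_root (r := ParentRel S)
    (fun _ _ _ => hS.1.parentRel_unique)
    (hS.1.not_parentRel_trunk hj) hroot (.head' ⟨a, ha, rfl, rfl⟩ hdesc)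

theorem image_reflect (hS : IsPlanarTreeDiagram I j S) (hj : j ∉ I) :
    IsPlanarTreeDiagram (I.image Fin.rev) j.rev (S.image reflect) := by
  obtain ⟨htree, hroot, hside, horder⟩ := hS
  refine ⟨htree.image_reflect, ?_, ?_, ?_⟩
  · simp only [Finset.forall_mem_image]
    exact fun i hi => transGen_parentRel_image_reflect (hroot i hi)
  · simp only [Finset.forall_mem_image, reflect_tailStr, reflect_headStr]
    intro a ha k hk
    have hk' : Descends S a.tailStr k.rev := by simpa using hk.of_image_reflect
    have hkhead : k.rev ≠ a.headStr := fun he =>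
      not_descends_tailStr_headStr ⟨htree, hroot, hside, horder⟩ hj ha (he ▸ hk')
    have hside_a := hside a ha k.rev hk'
    have hne := htree.1 a ha
    rw [Fin.rev_lt_rev, Fin.lt_rev_iff]
    grind
  · simp only [Finset.forall_mem_image, reflect_tailStr, reflect_headStr,
      reflect_headPos, Fin.rev_inj, Fin.rev_lt_rev]
    intro a ha b hb hhead hpos k k' hk hk'
    have := horder a ha b hb hhead hpos k.rev k'.rev
      (by simpa using hk.of_image_reflect) (by simpa using hk'.of_image_reflect)
    rw [← Fin.rev_lt_rev (i := k), ← Fin.rev_lt_rev (i := k')]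
    exact ⟨this.2, this.1⟩

end IsPlanarTreeDiagram

theorem isPlanarTreeDiagram_image_reflect_iff {I : Finset (Fin n)} {j : Fin n}
    {S : Finset (GArrow n)} (hj : j ∉ I) :
    IsPlanarTreeDiagram I j (S.image reflect) ↔
      IsPlanarTreeDiagram (I.image Fin.rev) j.rev S := by
  have hj' : j.rev ∉ I.image Fin.rev := by simpa using hj
  constructor
  · intro hS
    simpa [Finset.image_image_of_involutive reflect_involutive] using hS.image_reflect hj
  · intro hS
    simpa [Finset.image_image_of_involutive Fin.rev_involutive] using hS.image_reflect hj'

theorem treeSign_image_reflect {S : Finset (GArrow n)} (hS : ∀ a ∈ S, a.tailStr ≠ a.headStr) :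
    treeSign (S.image reflect) = (-1) ^ S.card * treeSign S := by
  have hleft : ((S.image reflect).filter fun a => a.tailStr < a.headStr) =
      (S.filter fun a => ¬ a.tailStr < a.headStr).image reflect := by
    rw [Finset.filter_image]
    refine congrArg _ (Finset.filter_congr fun a ha => ?_)
    rw [reflect_tailStr, reflect_headStr, Fin.rev_lt_rev, not_lt, (hS a ha).symm.le_iff_lt]
  have hcard := Finset.card_filter_add_card_filter_not (s := S) (fun a => a.tailStr < a.headStr)
  rw [treeSign, treeSign, hleft, Finset.card_image_of_injective _ reflect_injective, ← hcard,
    pow_add, mul_comm, ← mul_assoc, ← pow_add, ← two_mul, pow_mul]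
  simp

end Reflection

/-- **Behavior under reflection of the ordering.**  Let `Ḡ` be obtained from
`G` by reversing the ordering of the strings (string `k` of `Ḡ` is string
`n+1-k` of `G`, all arrows, endpoint orders and signs retained; with 0-indexed
strings the re-indexing is `Fin.rev`).  Then
`Z_{I,j}(Ḡ) = (-1)^{|I|} · Z_{Ī,j̄}(G)`. -/
theorem reflection_behavior {n : ℕ} (G Gbar : GaussDiagram n)
    (h : Gbar.arrows = G.arrows.image fun a =>
      GArrow.mk a.tailStr.rev a.tailPos a.headStr.rev a.headPos a.sign)
    (I : Finset (Fin n)) (j : Fin n) (hj : j ∉ I) :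
    Z I j Gbar = (-1) ^ I.card * Z (I.image Fin.rev) j.rev G := by
  change Gbar.arrows = G.arrows.image reflect at h
  rw [Z, Z, h, Finset.powerset_image,
    Finset.sum_image fun S _ T _ => (Finset.image_injective reflect_injective ·), Finset.mul_sum]
  refine Finset.sum_congr rfl fun S _ => ?_
  rw [isPlanarTreeDiagram_image_reflect_iff hj]
  split_ifs with hS
  · rw [treeSign_image_reflect hS.1.1, hS.1.card_eq,
      Finset.card_image_of_injective _ Fin.rev_injective,
      Finset.prod_image fun a _ b _ hab => reflect_injective hab]
    simp only [reflect_sign]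
    ring
  · rw [mul_zero]
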